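/- arXiv:0811.2126 — 3 statements merged into one kernel-verified Lean document; each statement's English description precedes it below -/
import Mathlib

section
/- Let n ≥ 3, p = 1, γ = n and α = n. If f is a Lebesgue measurable function on R^{n−1} satisfying ∫_{R^{n−1}} |f(y')|/(1+|y'|)^n dy' < ∞, and v is the Poisson integral of f on the upper half-space H, then v(x) = o( x_n^{1−n} |x|^n ) as |x| → ∞, uniformly for x ∈ H (no exceptional set is needed). -/
/-!
With `ρ = |x - (y',0)|` the Poisson kernel factors as
`P(x,y') = (2/ω_n) · x_n^{1-n} |x|^n · q(x,y')^n`, where `q(x,y') = x_n / (ρ |x|)`.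
Since `x_n ≤ ρ` and `|y'| ≤ |x| + ρ`, we have `q ≤ 1/|x|` and, for `|x| ≥ 1`,
`q ≤ 3/(1+|y'|)`. Hence `v(x) / (x_n^{1-n} |x|^n) = (2/ω_n) ∫ q^n f` tends to `0` by
dominated convergence, with majorant `3^n |f(y')| / (1+|y'|)^n`.
-/

open MeasureTheory Filter Metric Asymptotics ENNReal

/-- The last coordinate `x_n` of a point `x ∈ ℝⁿ`. -/
noncomputable def lastCoord {n : ℕ} (x : EuclideanSpace ℝ (Fin n)) : ℝ :=
  if h : 0 < n then x ⟨n - 1, Nat.sub_lt h one_pos⟩ else 0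

/-- The upper half-space `H = {x ∈ ℝⁿ : x_n > 0}`. -/
def upperHalfSpace (n : ℕ) : Set (EuclideanSpace ℝ (Fin n)) :=
  {x | 0 < lastCoord x}

/-- `ω_n = 2 π^{n/2} / Γ(n/2)`, the surface area of the unit sphere in ℝⁿ. -/
noncomputable def surfaceArea (n : ℕ) : ℝ :=
  2 * Real.pi ^ ((n : ℝ) / 2) / Real.Gamma ((n : ℝ) / 2)

/-- The embedding `y' ↦ (y', 0)` of `ℝ^{n-1}` into `ℝⁿ`. -/
noncomputable def extendBdry {n : ℕ} (y' : EuclideanSpace ℝ (Fin (n - 1))) :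
    EuclideanSpace ℝ (Fin n) :=
  (EuclideanSpace.equiv (Fin n) ℝ).symm
    (fun i => if h : (i : ℕ) < n - 1 then y' ⟨(i : ℕ), h⟩ else 0)

/-- The Poisson kernel `P(x, y') = 2 x_n / (ω_n |x - (y',0)|^n)` of the half-space. -/
noncomputable def halfSpacePoissonKernel (n : ℕ) (x : EuclideanSpace ℝ (Fin n))
    (y' : EuclideanSpace ℝ (Fin (n - 1))) : ℝ :=
  2 * lastCoord x / (surfaceArea n * ‖x - extendBdry y'‖ ^ n)

/-- The Poisson integral `v(x) = ∫_{ℝ^{n-1}} P(x,y') f(y') dy'`. -/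
noncomputable def poissonIntegral (n : ℕ) (f : EuclideanSpace ℝ (Fin (n - 1)) → ℝ)
    (x : EuclideanSpace ℝ (Fin n)) : ℝ :=
  ∫ y', halfSpacePoissonKernel n x y' * f y'

/-- The reflection `y* = (y', -y_n)` of `y` in the boundary hyperplane. -/
noncomputable def reflectPt {n : ℕ} (y : EuclideanSpace ℝ (Fin n)) :
    EuclideanSpace ℝ (Fin n) :=
  (EuclideanSpace.equiv (Fin n) ℝ).symm
    (fun i => if (i : ℕ) = n - 1 then -(y i) else y i)

/-- The Green function `G(x,y) = r_n (|x - y*|^{2-n} - |x - y|^{2-n})` of the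
half-space, where `r_n = 1/((n-2) ω_n)`. -/
noncomputable def greenFn (n : ℕ) (x y : EuclideanSpace ℝ (Fin n)) : ℝ :=
  (1 / (((n : ℝ) - 2) * surfaceArea n)) *
    (‖x - reflectPt y‖ ^ ((2 : ℝ) - n) - ‖x - y‖ ^ ((2 : ℝ) - n))

/-- The Green potential `h(x) = ∫_H G(x,y) dμ(y)`. -/
noncomputable def greenPotential (n : ℕ) (μ : Measure (EuclideanSpace ℝ (Fin n)))
    (x : EuclideanSpace ℝ (Fin n)) : ℝ :=
  ∫ y in upperHalfSpace n, greenFn n x y ∂μ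

/-- The maximal function of order `β` of a Borel measure `μ`:
`M(dμ)(x) = sup_{0<r<∞} μ(B(x,r))/r^β`. -/
noncomputable def maxFn {n : ℕ} (μ : Measure (EuclideanSpace ℝ (Fin n))) (β : ℝ)
    (x : EuclideanSpace ℝ (Fin n)) : ℝ≥0∞ :=
  ⨆ (r : ℝ) (_ : 0 < r), μ (Metric.ball x r) / ENNReal.ofReal (r ^ β)

open Topology

variable {n : ℕ}

lemma abs_lastCoord_le_norm (x : EuclideanSpace ℝ (Fin n)) : |lastCoord x| ≤ ‖x‖ := by
  unfold lastCoord
  split_ifs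
  · exact PiLp.norm_apply_le x _
  · simp

lemma lastCoord_le_norm (x : EuclideanSpace ℝ (Fin n)) : lastCoord x ≤ ‖x‖ :=
  (le_abs_self _).trans (abs_lastCoord_le_norm x)

lemma lastCoord_sub_extendBdry (x : EuclideanSpace ℝ (Fin n))
    (y' : EuclideanSpace ℝ (Fin (n - 1))) : lastCoord (x - extendBdry y') = lastCoord x := by
  unfold lastCoord extendBdry
  split_ifs <;> simp

lemma lastCoord_le_norm_sub_extendBdry (x : EuclideanSpace ℝ (Fin n))
    (y' : EuclideanSpace ℝ (Fin (n - 1))) : lastCoord x ≤ ‖x - extendBdry y'‖ := by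
  simpa [lastCoord_sub_extendBdry] using
    (le_abs_self _).trans (abs_lastCoord_le_norm (x - extendBdry y'))

lemma norm_le_norm_extendBdry (y' : EuclideanSpace ℝ (Fin (n - 1))) :
    ‖y'‖ ≤ ‖extendBdry y'‖ := by
  rw [EuclideanSpace.norm_eq, EuclideanSpace.norm_eq]
  refine Real.sqrt_le_sqrt ?_
  calc ∑ j, ‖y' j‖ ^ 2
        = ∑ j : Fin (n - 1), ‖extendBdry y' (Fin.castLE (Nat.sub_le n 1) j)‖ ^ 2 := by
        refine Finset.sum_congr rfl fun j _ => ?_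
        simp [extendBdry, j.2]
    _ = ∑ i ∈ Finset.univ.map (Fin.castLEEmb (Nat.sub_le n 1)), ‖extendBdry y' i‖ ^ 2 := by
        rw [Finset.sum_map]; rfl
    _ ≤ ∑ i, ‖extendBdry y' i‖ ^ 2 :=
        Finset.sum_le_univ_sum_of_nonneg fun _ => by positivity

lemma continuous_extendBdry : Continuous (extendBdry (n := n)) := by
  refine (EuclideanSpace.equiv (Fin n) ℝ).symm.continuous.comp (continuous_pi fun i => ?_)
  split_ifs with h
  · exact (EuclideanSpace.proj (𝕜 := ℝ) (⟨i, h⟩ : Fin (n - 1))).continuous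
  · exact continuous_const

noncomputable abbrev halfSpaceAtInfinity (n : ℕ) : Filter (EuclideanSpace ℝ (Fin n)) :=
  comap (fun x => ‖x‖) atTop ⊓ 𝓟 (upperHalfSpace n)

noncomputable def poissonRatio (x : EuclideanSpace ℝ (Fin n))
    (y' : EuclideanSpace ℝ (Fin (n - 1))) : ℝ :=
  lastCoord x / (‖x - extendBdry y'‖ * ‖x‖)

section UpperHalfSpace

variable {x : EuclideanSpace ℝ (Fin n)} (hx : x ∈ upperHalfSpace n)
include hx

lemma halfSpacePoissonKernel_eq (y' : EuclideanSpace ℝ (Fin (n - 1))) :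
    halfSpacePoissonKernel n x y' =
      2 / surfaceArea n * (lastCoord x ^ (1 - (n : ℝ)) * ‖x‖ ^ (n : ℝ)) *
        poissonRatio x y' ^ n := by
  have ht : 0 < lastCoord x := hx
  have hρ : 0 < ‖x - extendBdry y'‖ := ht.trans_le (lastCoord_le_norm_sub_extendBdry x y')
  have hX : 0 < ‖x‖ := ht.trans_le (lastCoord_le_norm x)
  rw [halfSpacePoissonKernel, poissonRatio, Real.rpow_sub ht, Real.rpow_one, Real.rpow_natCast,
    Real.rpow_natCast, div_pow, mul_pow]
  field_simp

lemma poissonRatio_nonneg (y' : EuclideanSpace ℝ (Fin (n - 1))) : 0 ≤ poissonRatio x y' := by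
  have : 0 < lastCoord x := hx
  unfold poissonRatio
  positivity

lemma poissonRatio_le_inv_norm (y' : EuclideanSpace ℝ (Fin (n - 1))) :
    poissonRatio x y' ≤ ‖x‖⁻¹ := by
  have ht : 0 < lastCoord x := hx
  have htρ := lastCoord_le_norm_sub_extendBdry x y'
  have hρ : 0 < ‖x - extendBdry y'‖ := ht.trans_le htρ
  have hX : 0 < ‖x‖ := ht.trans_le (lastCoord_le_norm x)
  calc poissonRatio x y' ≤ ‖x - extendBdry y'‖ / (‖x - extendBdry y'‖ * ‖x‖) := by
        unfold poissonRatio; gcongr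
    _ = ‖x‖⁻¹ := by field_simp

lemma poissonRatio_le (hx1 : 1 ≤ ‖x‖) (y' : EuclideanSpace ℝ (Fin (n - 1))) :
    poissonRatio x y' ≤ 3 / (1 + ‖y'‖) := by
  have ht : 0 < lastCoord x := hx
  have htX := lastCoord_le_norm x
  have htρ := lastCoord_le_norm_sub_extendBdry x y'
  have hρ : 0 < ‖x - extendBdry y'‖ := ht.trans_le htρ
  have hy : ‖y'‖ ≤ ‖x‖ + ‖x - extendBdry y'‖ := calc
    ‖y'‖ ≤ ‖extendBdry y'‖ := norm_le_norm_extendBdry y'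
    _ = ‖x - (x - extendBdry y')‖ := by simp
    _ ≤ ‖x‖ + ‖x - extendBdry y'‖ := norm_sub_le _ _
  rw [poissonRatio, div_le_div_iff₀ (by positivity) (by positivity)]
  nlinarith

end UpperHalfSpace

lemma tendsto_poissonRatio (y' : EuclideanSpace ℝ (Fin (n - 1))) :
    Tendsto (fun x => poissonRatio x y') (halfSpaceAtInfinity n)
      (𝓝 0) := by
  have hH : ∀ᶠ x in halfSpaceAtInfinity n, x ∈ upperHalfSpace n :=
    mem_inf_of_right (mem_principal_self _)
  refine tendsto_of_tendsto_of_tendsto_of_le_of_le' tendsto_const_nhds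
    ((tendsto_inv_atTop_zero.comp tendsto_comap).mono_left inf_le_left)
    (hH.mono fun x hx => poissonRatio_nonneg hx y')
    (hH.mono fun x hx => poissonRatio_le_inv_norm hx y')

lemma integrable_div_one_add_norm_rpow {E : Type*} [NormedAddCommGroup E] [MeasurableSpace E]
    [OpensMeasurableSpace E] {μ : Measure E} {f : E → ℝ} (hf : Measurable f) (s : ℝ)
    (hfint : ∫⁻ y, ENNReal.ofReal (|f y| / (1 + ‖y‖) ^ s) ∂μ < ⊤) :
    Integrable (fun y => |f y| / (1 + ‖y‖) ^ s) μ :=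
  (lintegral_ofReal_ne_top_iff_integrable
    (hf.abs.div ((measurable_const.add measurable_norm).pow_const s)).aestronglyMeasurable
    (ae_of_all _ fun _ => by dsimp; positivity)).1 hfint.ne

lemma measurable_poissonRatio (x : EuclideanSpace ℝ (Fin n)) : Measurable (poissonRatio x) :=
  measurable_const.div
    (((continuous_const.sub continuous_extendBdry).norm.mul continuous_const).measurable)

lemma tendsto_integral_poissonRatio_pow_mul (hn : 0 < n)
    {f : EuclideanSpace ℝ (Fin (n - 1)) → ℝ} (hf : Measurable f)
    (hfint : ∫⁻ y', ENNReal.ofReal (|f y'| / (1 + ‖y'‖) ^ (n : ℝ)) < ⊤) :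
    Tendsto (fun x => ∫ y', poissonRatio x y' ^ n * f y')
      (halfSpaceAtInfinity n) (𝓝 0) := by
  have hbound : ∀ᶠ x in halfSpaceAtInfinity n,
      ∀ y', ‖poissonRatio x y' ^ n * f y'‖ ≤
        3 ^ n * (|f y'| / (1 + ‖y'‖) ^ (n : ℝ)) := by
    filter_upwards [mem_inf_of_left (preimage_mem_comap (Ici_mem_atTop 1)),
      mem_inf_of_right (mem_principal_self _)] with x hx1 hx y'
    have hq := pow_le_pow_left₀ (poissonRatio_nonneg hx y') (poissonRatio_le hx hx1 y') n
    rw [norm_mul, norm_pow, Real.norm_of_nonneg (poissonRatio_nonneg hx y'), Real.norm_eq_abs,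
      Real.rpow_natCast, mul_div_assoc', ← div_mul_eq_mul_div, ← div_pow]
    gcongr
  simpa [zero_pow hn.ne'] using tendsto_integral_filter_of_dominated_convergence _
    (Eventually.of_forall fun x =>
      (((measurable_poissonRatio x).pow_const n).mul hf).aestronglyMeasurable)
    (hbound.mono fun x hx => ae_of_all _ hx)
    ((integrable_div_one_add_norm_rpow hf _ hfint).const_mul _)
    (ae_of_all _ fun y' => ((tendsto_poissonRatio y').pow n).mul_const (f y'))

/-- The case `p = 1`, `γ = n`, `α = n` (Siegel–Talvila, `m = 0`): the growth
estimate `v(x) = o(x_n^{1-n} |x|^n)` holds on all of `H`, with no exceptional set. -/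
theorem stmt2 (n : ℕ) (hn : 3 ≤ n)
    (f : EuclideanSpace ℝ (Fin (n - 1)) → ℝ) (hf : Measurable f)
    (hfint : ∫⁻ y', ENNReal.ofReal (|f y'| / (1 + ‖y'‖) ^ (n : ℝ)) < ⊤) :
    poissonIntegral n f =o[comap (fun x => ‖x‖) atTop ⊓ 𝓟 (upperHalfSpace n)]
      fun x => lastCoord x ^ (1 - (n : ℝ)) * ‖x‖ ^ (n : ℝ) := by
  set w : EuclideanSpace ℝ (Fin n) → ℝ := fun x =>
    lastCoord x ^ (1 - (n : ℝ)) * ‖x‖ ^ (n : ℝ)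
  set I : EuclideanSpace ℝ (Fin n) → ℝ := fun x => ∫ y', poissonRatio x y' ^ n * f y'
  have hI : I =o[halfSpaceAtInfinity n] fun _ => (1 : ℝ) :=
    (isLittleO_one_iff ℝ).2 (tendsto_integral_poissonRatio_pow_mul (by omega) hf hfint)
  have hv : (fun x => 2 / surfaceArea n * (w x * I x)) =ᶠ[halfSpaceAtInfinity n]
      poissonIntegral n f := by
    filter_upwards [mem_inf_of_right (mem_principal_self _)] with x hx
    simp only [w, I, poissonIntegral, halfSpacePoissonKernel_eq hx, mul_assoc, integral_const_mul]
  simpa only [mul_one] using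
    (((isBigO_refl w _).mul_isLittleO hI).const_mul_left (2 / surfaceArea n)).congr' hv
      EventuallyEq.rfl
end

section
/- Let μ be a positive Borel measure on R^n with μ(R^n) < ∞, let β ≥ 0, and let λ ≥ 5^β μ(R^n). Set E(λ) = { x ∈ R^n : |x| ≥ 2 and M(dμ)(x) > λ/|x|^β }. Then there exist points x_j ∈ E(λ) and radii ρ_j > 0 (j = 1, 2, …) such that E(λ) ⊂ ∪_{j=1}^∞ B(x_j, ρ_j) and Σ_{j=1}^∞ ρ_j^β/|x_j|^β ≤ 3·5^β μ(R^n)/λ. -/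
open MeasureTheory Filter Metric Asymptotics ENNReal

/-!
For `x ∈ E(λ)` pick `r_x > 0` with `μ(B(x, r_x)) > λ (r_x / |x|)^β`. Since this is at most
`μ(ℝⁿ) ≤ λ / 5^β`, we get `r_x < |x| / 5`, so a ball centred in the dyadic annulus
`2^k ≤ |x| < 2^(k+1)` stays in the shell `(4/5) 2^k ≤ |y| ≤ (12/5) 2^k`, and shells whose
indices differ by at least two are disjoint. A Vitali selection of pairwise disjoint balls in
each annulus, enlarged by the factor `3`, covers `E(λ)`; summing `μ(B(x_j, r_j))` over all the
selected balls counts every point at most twice, whence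
`∑ (3 r_j / |x_j|)^β ≤ 3^β · 2 μ(ℝⁿ) / λ ≤ 3 · 5^β μ(ℝⁿ) / λ`.
-/

open TopologicalSpace

lemma mul_lt_of_mul_rpow_lt {a c m r R β : ℝ} (hβ : 0 ≤ β) (ha : 0 < a) (hc : 0 ≤ c)
    (hr : 0 ≤ r) (hR : 0 ≤ R) (h : c * r ^ β < m) (hm : a ^ β * m ≤ c * R ^ β) :
    a * r < R := by
  by_contra! hle
  have : c * R ^ β < c * R ^ β :=
    calc c * R ^ β ≤ c * (a * r) ^ β := by gcongr
      _ = a ^ β * (c * r ^ β) := by rw [Real.mul_rpow ha.le hr]; ring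
      _ < a ^ β * m := by gcongr
      _ ≤ c * R ^ β := hm
  exact lt_irrefl _ this

lemma three_rpow_mul_two_mul_le {β t : ℝ} (hβ : 0 ≤ β) (ht : 0 ≤ t) :
    3 ^ β * (2 * t) ≤ 3 * 5 ^ β * t := by
  have h35 : (3 : ℝ) ^ β ≤ 5 ^ β := Real.rpow_le_rpow (by norm_num) (by norm_num) hβ
  have h3 : (0 : ℝ) ≤ 3 ^ β := Real.rpow_nonneg (by norm_num) β
  nlinarith

lemma summable_and_tsum_le_of_ofReal_mul_le {ι : Type*} {a : ι → ℝ} {m : ι → ℝ≥0∞}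
    {c : ℝ} {M : ℝ≥0∞} (hc : 0 < c) (ha : ∀ j, 0 ≤ a j)
    (hm : ∀ j, ENNReal.ofReal (c * a j) ≤ m j) (hM : ∑' j, m j ≤ M) (hM_top : M ≠ ⊤) :
    Summable a ∧ ∑' j, a j ≤ M.toReal / c := by
  have hc' : ENNReal.ofReal c ≠ 0 := (ENNReal.ofReal_pos.2 hc).ne'
  have hle : ∑' j, ENNReal.ofReal (a j) ≤ M / ENNReal.ofReal c := by
    rw [ENNReal.le_div_iff_mul_le (Or.inl hc') (Or.inl ofReal_ne_top), mul_comm,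
      ← ENNReal.tsum_mul_left]
    refine le_trans (ENNReal.tsum_le_tsum fun j => ?_) hM
    rw [← ENNReal.ofReal_mul hc.le]
    exact hm j
  have hfin : M / ENNReal.ofReal c ≠ ⊤ := ENNReal.div_ne_top hM_top hc'
  have hs : Summable a :=
    (ENNReal.summable_toReal (ne_top_of_le_ne_top hfin hle)).congr
      fun j => ENNReal.toReal_ofReal (ha j)
  refine ⟨hs, ?_⟩
  have := ENNReal.toReal_mono hfin hle
  rwa [← ENNReal.ofReal_tsum_of_nonneg ha hs, ENNReal.toReal_ofReal (tsum_nonneg ha),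
    ENNReal.toReal_div, ENNReal.toReal_ofReal hc.le] at this

lemma tsum_measure_le_two_mul_measure_univ {α : Type*} [MeasurableSpace α] (μ : Measure α)
    {s : ℕ → Set α} (hs : ∀ k, MeasurableSet (s k))
    (hdisj : ∀ i j, i + 2 ≤ j → Disjoint (s i) (s j)) :
    ∑' k, μ (s k) ≤ 2 * μ Set.univ := by
  have hparity : ∀ e, ∑' m, μ (s (2 * m + e)) ≤ μ Set.univ := by
    intro e
    have hpair : Pairwise (Function.onFun Disjoint fun m => s (2 * m + e)) := by
      intro i j hij
      rcases hij.lt_or_gt with h | h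
      · exact hdisj _ _ (by omega)
      · exact (hdisj _ _ (by omega)).symm
    rw [← measure_iUnion hpair fun m => hs _]
    exact measure_mono (Set.subset_univ _)
  calc ∑' k, μ (s k) = ∑' m, μ (s (2 * m)) + ∑' m, μ (s (2 * m + 1)) :=
        (tsum_even_add_odd ENNReal.summable ENNReal.summable).symm
    _ ≤ μ Set.univ + μ Set.univ := add_le_add (by simpa using hparity 0) (hparity 1)
    _ = 2 * μ Set.univ := (two_mul _).symm

theorem exists_countable_pairwiseDisjoint_ball_cover {α : Type*} [MetricSpace α]
    [SeparableSpace α] (s : Set α) (r : α → ℝ) (hr : ∀ x ∈ s, 0 < r x) (R : ℝ)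
    (hR : ∀ x ∈ s, r x ≤ R) :
    ∃ u ⊆ s, u.Countable ∧ u.PairwiseDisjoint (fun b => ball b (r b)) ∧
      s ⊆ ⋃ b ∈ u, ball b (3 * r b) := by
  obtain ⟨u, hus, hdisj, hcov⟩ := Vitali.exists_disjoint_subfamily_covering_enlargement
    (fun b => ball b (r b)) s r (3 / 2) (by norm_num) (fun x hx => (hr x hx).le) R hR
    (fun x hx => nonempty_ball.2 (hr x hx))
  refine ⟨u, hus, hdisj.countable_of_isOpen (fun _ _ => isOpen_ball)
    (fun b hb => nonempty_ball.2 (hr b (hus hb))), hdisj, fun x hx => ?_⟩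
  obtain ⟨b, hbu, ⟨y, hxy, hby⟩, hrxb⟩ := hcov x hx
  have hrb := hr b (hus hbu)
  refine Set.mem_biUnion hbu (mem_ball.2 ?_)
  calc dist x b ≤ dist y x + dist y b := dist_triangle_left x b y
    _ < r x + r b := add_lt_add (mem_ball.1 hxy) (mem_ball.1 hby)
    _ < 3 * r b := by linarith

section Covering

variable {E : Type*} [NormedAddCommGroup E]

def dyadicShell (E : Type*) [NormedAddCommGroup E] (k : ℕ) : Set E :=
  (‖·‖) ⁻¹' Set.Icc (2 ^ k * (4 / 5)) (2 ^ k * (12 / 5))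

lemma ball_subset_dyadicShell {a : E} {r : ℝ} {k : ℕ} (ha : 2 ^ k ≤ ‖a‖)
    (ha' : ‖a‖ < 2 ^ (k + 1)) (hr : 5 * r < ‖a‖) : ball a r ⊆ dyadicShell E k := by
  intro y hy
  have hya : ‖y - a‖ < r := mem_ball_iff_norm.1 hy
  have h₁ := norm_sub_norm_le y a
  have h₂ := norm_sub_norm_le a y
  rw [norm_sub_rev a y] at h₂
  rw [pow_succ] at ha'
  constructor <;> linarith

lemma disjoint_dyadicShell {i j : ℕ} (hij : i + 2 ≤ j) :
    Disjoint (dyadicShell E i) (dyadicShell E j) := by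
  refine Set.disjoint_left.2 fun y hyi hyj => ?_
  have hyi' : ‖y‖ ≤ 2 ^ i * (12 / 5) := hyi.2
  have hyj' : 2 ^ j * (4 / 5) ≤ ‖y‖ := hyj.1
  have : (2 : ℝ) ^ i * 4 ≤ 2 ^ j :=
    calc (2 : ℝ) ^ i * 4 = 2 ^ (i + 2) := by ring
      _ ≤ 2 ^ j := pow_le_pow_right₀ one_le_two hij
  linarith [pow_pos (two_pos : (0 : ℝ) < 2) i]

variable [SeparableSpace E] [MeasurableSpace E] [OpensMeasurableSpace E]

theorem exists_countable_ball_cover_tsum_measure_le (μ : Measure E) {s : Set E} {r : E → ℝ}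
    (hr : ∀ x ∈ s, 0 < r x ∧ 5 * r x < ‖x‖) (hs : ∀ x ∈ s, 1 ≤ ‖x‖) :
    ∃ u ⊆ s, u.Countable ∧ s ⊆ ⋃ b ∈ u, ball b (3 * r b) ∧
      ∑' b : u, μ (ball (b : E) (r b)) ≤ 2 * μ Set.univ := by
  set annulus : ℕ → Set E := fun k => s ∩ (‖·‖) ⁻¹' Set.Ico (2 ^ k) (2 ^ (k + 1))
  have hvitali : ∀ k, ∃ u ⊆ annulus k, u.Countable ∧
      u.PairwiseDisjoint (fun b => ball b (r b)) ∧ annulus k ⊆ ⋃ b ∈ u, ball b (3 * r b) :=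
    fun k => exists_countable_pairwiseDisjoint_ball_cover (annulus k) r
      (fun x hx => (hr x hx.1).1) (2 ^ (k + 1))
      fun x hx => by
        have hx' : ‖x‖ < 2 ^ (k + 1) := hx.2.2
        linarith [(hr x hx.1).1, (hr x hx.1).2]
  choose u hu_sub hu_cnt hu_disj hu_cov using hvitali
  refine ⟨⋃ k, u k, Set.iUnion_subset fun k => (hu_sub k).trans Set.inter_subset_left,
    Set.countable_iUnion hu_cnt, fun x hx => ?_, ?_⟩
  · obtain ⟨k, hk⟩ := exists_nat_pow_near (hs x hx) one_lt_two
    obtain ⟨b, hb, hxb⟩ := Set.mem_iUnion₂.1 (hu_cov k ⟨hx, hk⟩)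
    exact Set.mem_biUnion (Set.mem_iUnion_of_mem k hb) hxb
  calc ∑' b : ⋃ k, u k, μ (ball (b : E) (r b))
      ≤ ∑' k, ∑' b : u k, μ (ball (b : E) (r b)) :=
          ENNReal.tsum_iUnion_le_tsum (fun y => μ (ball y (r y))) u
    _ = ∑' k, μ (⋃ b ∈ u k, ball b (r b)) := by
        congr 1 with k
        exact (measure_biUnion (hu_cnt k) (hu_disj k) fun _ _ => measurableSet_ball).symm
    _ ≤ ∑' k, μ (dyadicShell E k) := ENNReal.tsum_le_tsum fun k => measure_mono <|
        Set.iUnion₂_subset fun b hb =>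
          have hb' := hu_sub k hb
          ball_subset_dyadicShell hb'.2.1 hb'.2.2 (hr b hb'.1).2
    _ ≤ 2 * μ Set.univ := tsum_measure_le_two_mul_measure_univ μ
        (fun k => measurableSet_Icc.preimage measurable_norm) fun _ _ => disjoint_dyadicShell

end Covering

section MaximalFunction

variable {n : ℕ} {μ : Measure (EuclideanSpace ℝ (Fin n))} {β : ℝ}
  {x : EuclideanSpace ℝ (Fin n)}

lemma exists_lt_measure_ball_of_lt_maxFn {c : ℝ} (hc : 0 ≤ c)
    (h : ENNReal.ofReal c < maxFn μ β x) :
    ∃ r, 0 < r ∧ ENNReal.ofReal (c * r ^ β) < μ (ball x r) := by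
  obtain ⟨r, h⟩ := lt_iSup_iff.1 h
  obtain ⟨hr, h⟩ := lt_iSup_iff.1 h
  have hrβ : ENNReal.ofReal (r ^ β) ≠ 0 :=
    (ENNReal.ofReal_pos.2 (Real.rpow_pos_of_pos hr β)).ne'
  rw [ENNReal.lt_div_iff_mul_lt (Or.inl hrβ) (Or.inl ofReal_ne_top),
    ← ENNReal.ofReal_mul hc] at h
  exact ⟨r, hr, h⟩

lemma pos_of_lt_maxFn {a : ℝ≥0∞} {lam : ℝ} (hμ : μ Set.univ ≠ ⊤)
    (hlam : 5 ^ β * (μ Set.univ).toReal ≤ lam) (hx : a < maxFn μ β x) : 0 < lam := by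
  have hμ0 : μ ≠ 0 := by
    rintro rfl
    simp [maxFn] at hx
  have : 0 < (μ Set.univ).toReal := ENNReal.toReal_pos (Measure.measure_univ_ne_zero.2 hμ0) hμ
  exact (mul_pos (by positivity) this).trans_le hlam

lemma exists_radius_of_lt_maxFn {lam : ℝ} (hμ : μ Set.univ ≠ ⊤) (hβ : 0 ≤ β)
    (hlam : 5 ^ β * (μ Set.univ).toReal ≤ lam) (hx : 0 < ‖x‖)
    (hmax : ENNReal.ofReal (lam / ‖x‖ ^ β) < maxFn μ β x) :
    ∃ r, 0 < r ∧ 5 * r < ‖x‖ ∧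
      ENNReal.ofReal (lam * (r ^ β / ‖x‖ ^ β)) < μ (ball x r) := by
  have hxβ : 0 < ‖x‖ ^ β := Real.rpow_pos_of_pos hx β
  have hc : 0 ≤ lam / ‖x‖ ^ β := div_nonneg (pos_of_lt_maxFn hμ hlam hmax).le hxβ.le
  obtain ⟨r, hr, hball⟩ := exists_lt_measure_ball_of_lt_maxFn hc hmax
  have hcr : lam / ‖x‖ ^ β * r ^ β < (μ Set.univ).toReal :=
    (ENNReal.ofReal_lt_iff_lt_toReal (by positivity) hμ).1 <|
      hball.trans_le (measure_mono (Set.subset_univ _))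
  have hlam' : 5 ^ β * (μ Set.univ).toReal ≤ lam / ‖x‖ ^ β * ‖x‖ ^ β := by
    rwa [div_mul_cancel₀ _ hxβ.ne']
  refine ⟨r, hr, mul_lt_of_mul_rpow_lt hβ (by norm_num) hc hr.le hx.le hcr hlam', ?_⟩
  convert hball using 2
  ring

end MaximalFunction

/-- Lemma 1 of the paper: a Vitali-type covering of the set
`E(λ) = {x : |x| ≥ 2, M(dμ)(x) > λ/|x|^β}` by countably many balls whose normalized
radii `(ρ_j/|x_j|)^β` have sum at most `3·5^β μ(ℝⁿ)/λ`. -/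
theorem stmt7 (n : ℕ) (μ : Measure (EuclideanSpace ℝ (Fin n)))
    (hμfin : μ Set.univ < ⊤) (β lam : ℝ) (hβ : 0 ≤ β)
    (hlam : 5 ^ β * (μ Set.univ).toReal ≤ lam) :
    ∃ (ι : Type) (_ : Countable ι) (c : ι → EuclideanSpace ℝ (Fin n)) (ρ : ι → ℝ),
      (∀ j, 2 ≤ ‖c j‖ ∧ ENNReal.ofReal (lam / ‖c j‖ ^ β) < maxFn μ β (c j)) ∧
      (∀ j, 0 < ρ j) ∧
      ({x : EuclideanSpace ℝ (Fin n) | 2 ≤ ‖x‖ ∧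
          ENNReal.ofReal (lam / ‖x‖ ^ β) < maxFn μ β x} ⊆
        ⋃ j, Metric.ball (c j) (ρ j)) ∧
      Summable (fun j => ρ j ^ β / ‖c j‖ ^ β) ∧
      ∑' j, ρ j ^ β / ‖c j‖ ^ β ≤ 3 * 5 ^ β * (μ Set.univ).toReal / lam := by
  set E := {x : EuclideanSpace ℝ (Fin n) | 2 ≤ ‖x‖ ∧
    ENNReal.ofReal (lam / ‖x‖ ^ β) < maxFn μ β x}
  obtain hE | ⟨x₀, hx₀⟩ := E.eq_empty_or_nonempty
  · have hlam₀ : 0 ≤ lam := le_trans (by positivity) hlam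
    refine ⟨Empty, inferInstance, Empty.elim, Empty.elim, (·.elim), (·.elim),
      hE.subset.trans (Set.empty_subset _), summable_empty, ?_⟩
    rw [tsum_empty]
    positivity
  have hlam_pos : 0 < lam := pos_of_lt_maxFn hμfin.ne hlam hx₀.2
  have hradius : ∀ x ∈ E, ∃ r, 0 < r ∧ 5 * r < ‖x‖ ∧
      ENNReal.ofReal (lam * (r ^ β / ‖x‖ ^ β)) < μ (ball x r) := fun x hx =>
    exists_radius_of_lt_maxFn hμfin.ne hβ hlam (by linarith [hx.1]) hx.2
  choose! r hr_pos hr_small hr_ball using hradius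
  obtain ⟨u, huE, hu_cnt, hcov, hsum⟩ := exists_countable_ball_cover_tsum_measure_le μ
    (fun x hx => ⟨hr_pos x hx, hr_small x hx⟩) (fun x hx => by linarith [hx.1])
  obtain ⟨hsummable, hle⟩ := summable_and_tsum_le_of_ofReal_mul_le hlam_pos
    (fun b : u => div_nonneg (Real.rpow_nonneg (hr_pos b (huE b.2)).le β) (by positivity))
    (fun b => (hr_ball b (huE b.2)).le) hsum (ENNReal.mul_ne_top (by simp) hμfin.ne)
  have hρ : (fun b : u => (3 * r b) ^ β / ‖(b : EuclideanSpace ℝ (Fin n))‖ ^ β)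
      = fun b : u => 3 ^ β * (r b ^ β / ‖(b : EuclideanSpace ℝ (Fin n))‖ ^ β) := by
    ext b
    rw [Real.mul_rpow (by norm_num) (hr_pos b (huE b.2)).le, mul_div_assoc]
  refine ⟨u, hu_cnt.to_subtype, (↑), fun b => 3 * r b, fun b => huE b.2,
    fun b => mul_pos three_pos (hr_pos b (huE b.2)), by rwa [Set.biUnion_eq_iUnion] at hcov, ?_⟩
  rw [hρ, tsum_mul_left]
  refine ⟨hsummable.mul_left _, (mul_le_mul_of_nonneg_left hle (by positivity)).trans ?_⟩
  rw [ENNReal.toReal_mul, ENNReal.toReal_ofNat, mul_div_assoc, mul_div_assoc]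
  exact three_rpow_mul_two_mul_le hβ (by positivity)
end

section
/- Let n ≥ 3, let 1 < p < ∞ with 1/p + 1/q = 1, and let γ > −(n−1)(p−1). Let f be a Lebesgue measurable function on R^{n−1} with ∫_{R^{n−1}} |f(y')|^p/(1+|y'|)^γ dy' < ∞. For x ∈ H define v_1(x) = ∫_{{y' ∈ R^{n−1} : 1 < |y'| ≤ |x|/2}} P(x, y') f(y') dy'. Then v_1(x) = o( x_n |x|^{γ/p + (n−1)/q − n} ) as |x| → ∞, x ∈ H. -/
open MeasureTheory Filter Metric Asymptotics ENNReal

/-! For `|y'| ≤ |x|/2` we have `|x - (y',0)| ≥ |x|/2`, so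
`|v₁(x)| ≲ x_n |x|^{-n} ∫_{1<|y'|≤|x|} |f|`, and it suffices to show `∫_{1<|y'|≤R} |f| = o(R^τ)`
with `τ = γ/p + (n-1)/q`. Hölder's inequality with the weight `(1+|y'|)^{γ/p}` bounds the part
`A < |y'| ≤ R` of this integral by `(∫_{|y'|>A} |f|^p (1+|y'|)^{-γ})^{1/p} · O(R^τ)`: the condition
`γ > -(n-1)(p-1)` says exactly that `|y'|^{γq/p}` is locally integrable, so that its integral over
the ball of radius `R` scales like `R^{qτ}`. The first factor tends to `0` as `A → ∞`, and the
part `|y'| ≤ A` is a constant. -/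

open Set Module Topology

lemma one_add_rpow_le_mul_rpow {t : ℝ} (ht : 1 ≤ t) (α : ℝ) :
    (1 + t) ^ α ≤ (2 ^ α + 1) * t ^ α := by
  have ht0 : 0 < t := by linarith
  have hpow : 0 ≤ t ^ α := Real.rpow_nonneg ht0.le α
  rcases le_or_gt 0 α with hα | hα
  · calc (1 + t) ^ α ≤ (2 * t) ^ α := Real.rpow_le_rpow (by linarith) (by linarith) hα
      _ = 2 ^ α * t ^ α := Real.mul_rpow zero_le_two ht0.le
      _ ≤ (2 ^ α + 1) * t ^ α := by nlinarith
  · calc (1 + t) ^ α ≤ t ^ α := Real.rpow_le_rpow_of_nonpos ht0 (by linarith) hα.le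
      _ ≤ (2 ^ α + 1) * t ^ α := by nlinarith [Real.rpow_pos_of_pos two_pos α]

lemma div_add_div_pos_of_neg_mul_sub_one_lt {p q : ℝ} (hpq : p.HolderConjugate q) {d γ : ℝ}
    (h : -d * (p - 1) < γ) : 0 < γ / p + d / q := by
  have hq := hpq.symm.pos
  rw [← neg_lt_iff_pos_add, lt_div_iff₀ hpq.pos, ← hpq.sub_one_mul_conj]
  calc -(d / q) * ((p - 1) * q) = -d * (p - 1) := by field_simp
    _ < γ := h

theorem lintegral_ofReal_abs_le_weighted_holder {α : Type*} [MeasurableSpace α]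
    (μ : Measure α) {p q : ℝ} (hpq : p.HolderConjugate q) {f w : α → ℝ} (hf : Measurable f)
    (hw : Measurable w) (hw_pos : ∀ x, 0 < w x) (γ : ℝ) :
    ∫⁻ x, ENNReal.ofReal |f x| ∂μ ≤
      (∫⁻ x, ENNReal.ofReal (|f x| ^ p / w x ^ γ) ∂μ) ^ (1 / p) *
        (∫⁻ x, ENNReal.ofReal (w x ^ (γ / p * q)) ∂μ) ^ (1 / q) := by
  have hF_nonneg (x : α) : 0 ≤ |f x| * w x ^ (-(γ / p)) :=
    mul_nonneg (abs_nonneg _) (Real.rpow_nonneg (hw_pos x).le _)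
  set F : α → ℝ≥0∞ := fun x => ENNReal.ofReal (|f x| * w x ^ (-(γ / p)))
  set G : α → ℝ≥0∞ := fun x => ENNReal.ofReal (w x ^ (γ / p))
  have hFG (x : α) : ENNReal.ofReal |f x| = (F * G) x := by
    rw [Pi.mul_apply, ← ENNReal.ofReal_mul (hF_nonneg x), mul_assoc,
      ← Real.rpow_add (hw_pos x), neg_add_cancel, Real.rpow_zero, mul_one]
  have hFp (x : α) : F x ^ p = ENNReal.ofReal (|f x| ^ p / w x ^ γ) := by
    rw [ENNReal.ofReal_rpow_of_nonneg (hF_nonneg x) hpq.nonneg,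
      Real.mul_rpow (abs_nonneg _) (Real.rpow_nonneg (hw_pos x).le _),
      ← Real.rpow_mul (hw_pos x).le, neg_mul, div_mul_cancel₀ γ hpq.ne_zero,
      Real.rpow_neg (hw_pos x).le, div_eq_mul_inv]
  have hGq (x : α) : G x ^ q = ENNReal.ofReal (w x ^ (γ / p * q)) := by
    rw [ENNReal.ofReal_rpow_of_nonneg (Real.rpow_nonneg (hw_pos x).le _) hpq.symm.nonneg,
      ← Real.rpow_mul (hw_pos x).le]
  calc ∫⁻ x, ENNReal.ofReal |f x| ∂μ = ∫⁻ x, (F * G) x ∂μ := lintegral_congr hFG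
    _ ≤ (∫⁻ x, F x ^ p ∂μ) ^ (1 / p) * (∫⁻ x, G x ^ q ∂μ) ^ (1 / q) :=
      ENNReal.lintegral_mul_le_Lp_mul_Lq μ hpq (by fun_prop) (by fun_prop)
    _ = _ := by simp only [hFp, hGq]

lemma norm_setIntegral_mul_le {α : Type*} [MeasurableSpace α] {μ : Measure α} {s : Set α}
    (hs : MeasurableSet s) {k f : α → ℝ} {K : ℝ} (hK : 0 ≤ K) (hk : ∀ y ∈ s, |k y| ≤ K)
    (hfs : ∫⁻ y in s, ENNReal.ofReal |f y| ∂μ ≠ ⊤) :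
    ‖∫ y in s, k y * f y ∂μ‖ ≤ K * (∫⁻ y in s, ENNReal.ofReal |f y| ∂μ).toReal := by
  calc ‖∫ y in s, k y * f y ∂μ‖ ≤ (∫⁻ y in s, ENNReal.ofReal ‖k y * f y‖ ∂μ).toReal :=
        norm_integral_le_lintegral_norm _
    _ ≤ (∫⁻ y in s, ENNReal.ofReal K * ENNReal.ofReal |f y| ∂μ).toReal := by
        refine ENNReal.toReal_mono ?_ (setLIntegral_mono' hs fun y hy => ?_)
        · rw [lintegral_const_mul' _ _ ENNReal.ofReal_ne_top]
          exact ENNReal.mul_ne_top ENNReal.ofReal_ne_top hfs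
        · rw [norm_mul, Real.norm_eq_abs, Real.norm_eq_abs, ← ENNReal.ofReal_mul hK]
          exact ENNReal.ofReal_le_ofReal (by gcongr; exact hk y hy)
    _ = _ := by
        rw [lintegral_const_mul' _ _ ENNReal.ofReal_ne_top, ENNReal.toReal_mul,
          ENNReal.toReal_ofReal hK]

lemma tendsto_setLIntegral_norm_Ioi_zero {E : Type*} [NormedAddCommGroup E] [MeasurableSpace E]
    [OpensMeasurableSpace E] {μ : Measure E} {g : E → ℝ≥0∞} (hg : ∫⁻ y, g y ∂μ ≠ ⊤) :
    Tendsto (fun A : ℝ => ∫⁻ y in (‖·‖) ⁻¹' Ioi A, g y ∂μ) atTop (𝓝 0) := by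
  have hmeas (A : ℝ) : MeasurableSet ((‖·‖) ⁻¹' Ioi A : Set E) :=
    measurableSet_Ioi.preimage measurable_norm
  have hanti : Antitone fun A : ℝ => ((‖·‖) ⁻¹' Ioi A : Set E) :=
    fun A B hAB => preimage_mono (Ioi_subset_Ioi hAB)
  have hempty : ⋂ A : ℝ, ((‖·‖) ⁻¹' Ioi A : Set E) = ∅ :=
    eq_empty_of_forall_notMem fun y hy => lt_irrefl ‖y‖ (mem_iInter.1 hy ‖y‖)
  have hfinite : μ.withDensity g ((‖·‖) ⁻¹' Ioi 0) ≠ ⊤ := by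
    rw [withDensity_apply _ (hmeas 0)]
    exact ne_top_of_le_ne_top hg (setLIntegral_le_lintegral _ _)
  have := tendsto_measure_iInter_atTop (fun A => (hmeas A).nullMeasurableSet) hanti ⟨0, hfinite⟩
  rw [hempty, measure_empty] at this
  exact this.congr fun A => withDensity_apply _ (hmeas A)

section AddHaar

variable {E : Type*} [NormedAddCommGroup E] [NormedSpace ℝ E] [FiniteDimensional ℝ E]
  [MeasurableSpace E] [BorelSpace E] (μ : Measure E) [μ.IsAddHaarMeasure]

lemma setIntegral_closedBall_norm_rpow {R : ℝ} (hR : 0 < R) (α : ℝ) :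
    ∫ x in closedBall (0 : E) R, ‖x‖ ^ α ∂μ =
      R ^ (α + finrank ℝ E) * ∫ x in closedBall (0 : E) 1, ‖x‖ ^ α ∂μ := by
  have hscale :=
    Measure.setIntegral_comp_smul_of_pos μ (fun x : E => ‖x‖ ^ α) (closedBall 0 1) hR
  simp only [smul_unitClosedBall_of_nonneg hR.le, norm_smul, Real.norm_of_nonneg hR.le,
    Real.mul_rpow hR.le (norm_nonneg _), integral_const_mul, smul_eq_mul] at hscale
  rw [Real.rpow_add hR, Real.rpow_natCast, mul_comm (R ^ α), mul_assoc, hscale,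
    mul_inv_cancel_left₀ (pow_ne_zero _ hR.ne')]

variable [Nontrivial E]

lemma integrableOn_closedBall_norm_rpow {α : ℝ} (hα : -(finrank ℝ E : ℝ) < α) (R : ℝ) :
    IntegrableOn (fun x : E => ‖x‖ ^ α) (closedBall 0 R) μ := by
  refine IntegrableOn.mono_set ?_ (closedBall_subset_ball (lt_add_one R))
  refine integrableOn_ball_of_norm_le_rpow (C := 1) (α := -α) finrank_pos (by linarith) ?_
    (measurable_norm.pow_const α).aestronglyMeasurable
  exact ae_of_all _ fun x => by
    rw [neg_neg, one_mul, Real.norm_of_nonneg (Real.rpow_nonneg (norm_nonneg x) _)]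

lemma lintegral_norm_Ioc_one_add_norm_rpow_le {α : ℝ} (hα : -(finrank ℝ E : ℝ) < α) {R : ℝ}
    (hR : 0 < R) :
    ∫⁻ y in (‖·‖) ⁻¹' Ioc 1 R, ENNReal.ofReal ((1 + ‖y‖) ^ α) ∂μ ≤
      ENNReal.ofReal ((2 ^ α + 1) * (∫ x in closedBall (0 : E) 1, ‖x‖ ^ α ∂μ) *
        R ^ (α + finrank ℝ E)) := by
  calc ∫⁻ y in (‖·‖) ⁻¹' Ioc 1 R, ENNReal.ofReal ((1 + ‖y‖) ^ α) ∂μ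
      ≤ ∫⁻ y in closedBall (0 : E) R, ENNReal.ofReal ((2 ^ α + 1) * ‖y‖ ^ α) ∂μ :=
        (setLIntegral_mono' (measurableSet_Ioc.preimage measurable_norm) fun y hy =>
          ENNReal.ofReal_le_ofReal (one_add_rpow_le_mul_rpow hy.1.le α)).trans
          (lintegral_mono_set fun y hy => mem_closedBall_zero_iff.2 hy.2)
    _ = ENNReal.ofReal (∫ y in closedBall (0 : E) R, (2 ^ α + 1) * ‖y‖ ^ α ∂μ) :=
        (ofReal_integral_eq_lintegral_ofReal
          ((integrableOn_closedBall_norm_rpow μ hα R).const_mul _)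
          (ae_of_all _ fun y => by positivity)).symm
    _ = _ := by rw [integral_const_mul, setIntegral_closedBall_norm_rpow μ hR]; ring_nf

variable {p q γ : ℝ} {f : E → ℝ}

lemma exists_lintegral_norm_Ioc_le (hpq : p.HolderConjugate q)
    (hγ : -(finrank ℝ E : ℝ) * (p - 1) < γ) (hf : Measurable f) :
    ∃ C : ℝ≥0∞, C ≠ ⊤ ∧ ∀ A R : ℝ, 1 ≤ A → 0 < R →
      ∫⁻ y in (‖·‖) ⁻¹' Ioc A R, ENNReal.ofReal |f y| ∂μ ≤
        (∫⁻ y in (‖·‖) ⁻¹' Ioi A, ENNReal.ofReal (|f y| ^ p / (1 + ‖y‖) ^ γ) ∂μ) ^ (1 / p) *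
          C * ENNReal.ofReal (R ^ (γ / p + finrank ℝ E / q)) := by
  set d : ℝ := (finrank ℝ E : ℝ)
  set α := γ / p * q
  have hq := hpq.symm.pos
  have hα : -d < α := by
    have := mul_pos (div_add_div_pos_of_neg_mul_sub_one_lt hpq hγ) hq
    rw [add_mul, div_mul_cancel₀ d hq.ne'] at this
    linarith
  set K := (2 ^ α + 1) * ∫ x in closedBall (0 : E) 1, ‖x‖ ^ α ∂μ
  have hK : 0 ≤ K := mul_nonneg (by positivity)
    (setIntegral_nonneg measurableSet_closedBall fun x _ => by positivity)
  refine ⟨ENNReal.ofReal K ^ (1 / q), ENNReal.rpow_ne_top_of_nonneg hpq.symm.one_div_nonneg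
    ENNReal.ofReal_ne_top, fun A R hA hR => ?_⟩
  have hweight : (∫⁻ y in (‖·‖) ⁻¹' Ioc A R, ENNReal.ofReal ((1 + ‖y‖) ^ α) ∂μ) ^ (1 / q) ≤
      ENNReal.ofReal K ^ (1 / q) * ENNReal.ofReal (R ^ (γ / p + d / q)) := by
    calc _ ≤ ENNReal.ofReal (K * R ^ (α + d)) ^ (1 / q) :=
          ENNReal.rpow_le_rpow ((lintegral_mono_set (preimage_mono (Ioc_subset_Ioc_left hA))).trans
            (lintegral_norm_Ioc_one_add_norm_rpow_le μ hα hR)) hpq.symm.one_div_nonneg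
      _ = _ := by
          rw [ENNReal.ofReal_mul hK, ENNReal.mul_rpow_of_nonneg _ _ hpq.symm.one_div_nonneg,
            ENNReal.ofReal_rpow_of_nonneg (Real.rpow_nonneg hR.le _) hpq.symm.one_div_nonneg,
            ← Real.rpow_mul hR.le]
          congr 3
          simp only [α]
          field_simp
  calc _ ≤ _ := lintegral_ofReal_abs_le_weighted_holder _ hpq hf
        (by fun_prop : Measurable fun y : E => 1 + ‖y‖) (fun y => by positivity) γ
    _ ≤ _ := by
        rw [mul_assoc]
        exact mul_le_mul' (ENNReal.rpow_le_rpow (lintegral_mono_set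
          (preimage_mono Ioc_subset_Ioi_self)) hpq.one_div_nonneg) hweight

variable (hpq : p.HolderConjugate q) (hγ : -(finrank ℝ E : ℝ) * (p - 1) < γ)
  (hf : Measurable f) (hfint : ∫⁻ y, ENNReal.ofReal (|f y| ^ p / (1 + ‖y‖) ^ γ) ∂μ ≠ ⊤)
include hpq hγ hf hfint

lemma lintegral_norm_Ioc_ne_top {R : ℝ} (hR : 0 < R) :
    ∫⁻ y in (‖·‖) ⁻¹' Ioc 1 R, ENNReal.ofReal |f y| ∂μ ≠ ⊤ := by
  obtain ⟨C, hC_ne_top, hC⟩ := exists_lintegral_norm_Ioc_le μ hpq hγ hf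
  refine ne_top_of_le_ne_top ?_ (hC 1 R le_rfl hR)
  refine ENNReal.mul_ne_top (ENNReal.mul_ne_top ?_ hC_ne_top) ENNReal.ofReal_ne_top
  exact ENNReal.rpow_ne_top_of_nonneg hpq.one_div_nonneg
    (ne_top_of_le_ne_top hfint (setLIntegral_le_lintegral _ _))

theorem isLittleO_lintegral_norm_Ioc :
    (fun R => (∫⁻ y in (‖·‖) ⁻¹' Ioc 1 R, ENNReal.ofReal |f y| ∂μ).toReal) =o[atTop]
      fun R => R ^ (γ / p + finrank ℝ E / q) := by
  obtain ⟨C, hC_ne_top, hC⟩ := exists_lintegral_norm_Ioc_le μ hpq hγ hf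
  set τ := γ / p + (finrank ℝ E : ℝ) / q
  set J := fun R : ℝ => ∫⁻ y in (‖·‖) ⁻¹' Ioc 1 R, ENNReal.ofReal |f y| ∂μ
  have hτ : 0 < τ := div_add_div_pos_of_neg_mul_sub_one_lt hpq hγ
  have htail : Tendsto (fun A : ℝ => (∫⁻ y in (‖·‖) ⁻¹' Ioi A,
      ENNReal.ofReal (|f y| ^ p / (1 + ‖y‖) ^ γ) ∂μ) ^ (1 / p) * C) atTop (𝓝 0) := by
    have := ENNReal.Tendsto.mul_const ((ENNReal.continuous_rpow_const (y := 1 / p)).tendsto 0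
      |>.comp (tendsto_setLIntegral_norm_Ioi_zero hfint)) (Or.inr hC_ne_top)
    rwa [ENNReal.zero_rpow_of_pos hpq.one_div_pos, zero_mul] at this
  rw [isLittleO_iff]
  intro ε hε
  obtain ⟨A, hA, hA1⟩ := ((htail.eventually (gt_mem_nhds (ENNReal.ofReal_pos.2 (half_pos hε)))).and
    (eventually_ge_atTop 1)).exists
  filter_upwards [eventually_ge_atTop A,
    (tendsto_rpow_atTop hτ).eventually_ge_atTop (2 / ε * (J A).toReal)] with R hRA hRτ
  have hR : 0 < R := by linarith
  rw [Real.norm_of_nonneg ENNReal.toReal_nonneg, Real.norm_of_nonneg (by positivity)]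
  refine ENNReal.toReal_le_of_le_ofReal (by positivity) ?_
  have hnear : J A ≤ ENNReal.ofReal (ε / 2 * R ^ τ) := by
    rw [← ENNReal.ofReal_toReal (show J A ≠ ⊤ from
      lintegral_norm_Ioc_ne_top μ hpq hγ hf hfint (by linarith))]
    refine ENNReal.ofReal_le_ofReal ?_
    rw [div_mul_eq_mul_div, div_le_iff₀ hε] at hRτ
    linarith
  have hsplit : (‖·‖) ⁻¹' Ioc 1 R ⊆ (‖·‖) ⁻¹' Ioc 1 A ∪ ((‖·‖) ⁻¹' Ioc A R : Set E) :=
    fun y hy => Ioc_subset_Ioc_union_Ioc hy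
  calc J R ≤ J A + ∫⁻ y in (‖·‖) ⁻¹' Ioc A R, ENNReal.ofReal |f y| ∂μ :=
        (lintegral_mono_set hsplit).trans (lintegral_union_le _ _ _)
    _ ≤ ENNReal.ofReal (ε / 2 * R ^ τ) + ENNReal.ofReal (ε / 2) * ENNReal.ofReal (R ^ τ) :=
        add_le_add hnear ((hC A R hA1 hR).trans (by gcongr))
    _ = ENNReal.ofReal (ε * R ^ τ) := by
        rw [← ENNReal.ofReal_mul (by positivity), ← ENNReal.ofReal_add (by positivity)
          (by positivity)]
        ring_nf

end AddHaar

lemma norm_extendBdry {n : ℕ} (hn : 0 < n) (y' : EuclideanSpace ℝ (Fin (n - 1))) :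
    ‖(extendBdry y' : EuclideanSpace ℝ (Fin n))‖ = ‖y'‖ := by
  obtain ⟨m, rfl⟩ : ∃ m, n = m + 1 := ⟨n - 1, (Nat.succ_pred_eq_of_pos hn).symm⟩
  rw [EuclideanSpace.norm_eq, EuclideanSpace.norm_eq, Fin.sum_univ_castSucc]
  simp [extendBdry]

lemma surfaceArea_pos {n : ℕ} (hn : 0 < n) : 0 < surfaceArea n := by
  have := Real.Gamma_pos_of_pos (by positivity : (0 : ℝ) < n / 2)
  unfold surfaceArea
  positivity

lemma norm_pos_of_mem_upperHalfSpace {n : ℕ} {x : EuclideanSpace ℝ (Fin n)}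
    (hx : x ∈ upperHalfSpace n) : 0 < ‖x‖ := by
  refine norm_pos_iff.2 fun h => ?_
  simp [upperHalfSpace, lastCoord, h] at hx

lemma abs_halfSpacePoissonKernel_le {n : ℕ} (hn : 0 < n) {x : EuclideanSpace ℝ (Fin n)}
    (hx : x ∈ upperHalfSpace n) {y' : EuclideanSpace ℝ (Fin (n - 1))} (hy : ‖y'‖ ≤ ‖x‖ / 2) :
    |halfSpacePoissonKernel n x y'| ≤ 2 ^ (n + 1) / surfaceArea n * (lastCoord x / ‖x‖ ^ n) := by
  have hω := surfaceArea_pos hn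
  have hxn : 0 < lastCoord x := hx
  have hx0 := norm_pos_of_mem_upperHalfSpace hx
  have hdist : ‖x‖ / 2 ≤ ‖x - extendBdry y'‖ := by
    have := norm_sub_norm_le x (extendBdry y')
    rw [norm_extendBdry hn] at this
    linarith
  unfold halfSpacePoissonKernel
  rw [abs_of_nonneg (by positivity)]
  calc 2 * lastCoord x / (surfaceArea n * ‖x - extendBdry y'‖ ^ n)
      ≤ 2 * lastCoord x / (surfaceArea n * (‖x‖ / 2) ^ n) := by gcongr
    _ = _ := by rw [div_pow]; field_simp; ring

lemma norm_setIntegral_halfSpacePoissonKernel_mul_le {n : ℕ} (hn : 0 < n)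
    {x : EuclideanSpace ℝ (Fin n)} (hx : x ∈ upperHalfSpace n)
    {f : EuclideanSpace ℝ (Fin (n - 1)) → ℝ}
    (hfx : ∫⁻ y in (‖·‖) ⁻¹' Ioc 1 ‖x‖, ENNReal.ofReal |f y| ≠ ⊤) :
    ‖∫ y' in (‖·‖) ⁻¹' Ioc 1 (‖x‖ / 2), halfSpacePoissonKernel n x y' * f y'‖ ≤
      2 ^ (n + 1) / surfaceArea n * (lastCoord x / ‖x‖ ^ n) *
        (∫⁻ y in (‖·‖) ⁻¹' Ioc 1 ‖x‖, ENNReal.ofReal |f y|).toReal := by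
  have hsub : ((‖·‖) ⁻¹' Ioc 1 (‖x‖ / 2) : Set (EuclideanSpace ℝ (Fin (n - 1)))) ⊆
      (‖·‖) ⁻¹' Ioc 1 ‖x‖ :=
    preimage_mono (Ioc_subset_Ioc_right (by linarith [norm_pos_of_mem_upperHalfSpace hx]))
  have hω := surfaceArea_pos hn
  have hxn : 0 < lastCoord x := hx
  refine (norm_setIntegral_mul_le (measurableSet_Ioc.preimage measurable_norm) (by positivity)
    (fun y hy => abs_halfSpacePoissonKernel_le hn hx hy.2)
    (ne_top_of_le_ne_top hfx (lintegral_mono_set hsub))).trans ?_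
  gcongr

/-- Estimate for `v₁(x) = ∫_{1<|y'|≤|x|/2} P(x,y') f(y') dy'`:
`v₁(x) = o(x_n |x|^{γ/p+(n-1)/q-n})` as `|x| → ∞`, `x ∈ H`. -/
theorem stmt11 (n : ℕ) (hn : 3 ≤ n) (p q γ : ℝ) (hp : 1 < p)
    (hpq : 1 / p + 1 / q = 1) (hγ : -((n : ℝ) - 1) * (p - 1) < γ)
    (f : EuclideanSpace ℝ (Fin (n - 1)) → ℝ) (hf : Measurable f)
    (hfint : ∫⁻ y', ENNReal.ofReal (|f y'| ^ p / (1 + ‖y'‖) ^ γ) < ⊤) :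
    (fun x : EuclideanSpace ℝ (Fin n) =>
        ∫ y' in {y' : EuclideanSpace ℝ (Fin (n - 1)) | 1 < ‖y'‖ ∧ ‖y'‖ ≤ ‖x‖ / 2},
          halfSpacePoissonKernel n x y' * f y')
      =o[comap (fun x => ‖x‖) atTop ⊓ 𝓟 (upperHalfSpace n)]
      fun x => lastCoord x * ‖x‖ ^ (γ / p + ((n : ℝ) - 1) / q - n) := by
  have hpq' : p.HolderConjugate q :=
    Real.holderConjugate_iff.2 ⟨hp, by simpa only [one_div] using hpq⟩
  have hdim : (finrank ℝ (EuclideanSpace ℝ (Fin (n - 1))) : ℝ) = n - 1 := by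
    rw [finrank_euclideanSpace_fin, Nat.cast_sub (by omega), Nat.cast_one]
  have : Nonempty (Fin (n - 1)) := ⟨⟨0, by omega⟩⟩
  rw [← hdim] at hγ ⊢
  set l := comap (fun x : EuclideanSpace ℝ (Fin n) => ‖x‖) atTop ⊓ 𝓟 (upperHalfSpace n)
  have hJ := (isLittleO_lintegral_norm_Ioc volume hpq' hγ hf hfint.ne).comp_tendsto
    (tendsto_comap.mono_left inf_le_left : Tendsto (‖·‖) l atTop)
  have hv : (fun x => ∫ y' in {y' : EuclideanSpace ℝ (Fin (n - 1)) | 1 < ‖y'‖ ∧ ‖y'‖ ≤ ‖x‖ / 2},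
      halfSpacePoissonKernel n x y' * f y') =O[l] fun x => lastCoord x / ‖x‖ ^ n *
        (∫⁻ y in (‖·‖) ⁻¹' Ioc 1 ‖x‖, ENNReal.ofReal |f y|).toReal := by
    refine IsBigO.of_bound (2 ^ (n + 1) / surfaceArea n) ?_
    filter_upwards [mem_inf_of_right (mem_principal_self _)] with x hx
    have hxn : 0 < lastCoord x := hx
    rw [Real.norm_of_nonneg (mul_nonneg (by positivity) ENNReal.toReal_nonneg), ← mul_assoc]
    exact norm_setIntegral_halfSpacePoissonKernel_mul_le (by omega) hx
      (lintegral_norm_Ioc_ne_top volume hpq' hγ hf hfint.ne (norm_pos_of_mem_upperHalfSpace hx))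
  refine (hv.trans_isLittleO ((isBigO_refl _ l).mul_isLittleO hJ)).congr' EventuallyEq.rfl ?_
  filter_upwards [mem_inf_of_right (mem_principal_self _)] with x hx
  rw [Function.comp_apply, Real.rpow_sub (norm_pos_of_mem_upperHalfSpace hx), Real.rpow_natCast]
  ring
end
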